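/- The energy of the coupled KdV–mKdV system: D_t((1/2)(u² + uv² − v·v₂)) = D_x(T), where T := (1/2)(4u³ + 9u²v² − 2u·u₂ + 3u·v⁴ − 11u·v·v₂ + u·v₁² + u₁² − u₁·v·v₁ − 4u₂·v² − 6v³·v₂ − 3v²·v₁² + v·v₄ − v₁·v₃ + v₂²). In particular (1/2)(u² + uv² − v·v₂) is a conserved density of the system. -/
import Mathlib


/-!
STATEMENT 16: The energy of the coupled KdV–mKdV system:
`D_t((1/2)(u² + uv² − v·v₂)) = D_x(T)` with the explicit flux
`T := (1/2)(4u³ + 9u²v² − 2u·u₂ + 3u·v⁴ − 11u·v·v₂ + u·v₁² + u₁² − u₁·v·v₁ − 4u₂·v²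
      − 6v³·v₂ − 3v²·v₁² + v·v₄ − v₁·v₃ + v₂²)`.
In particular `(1/2)(u² + uv² − v·v₂)` is a conserved density of the system.
-/

open MvPolynomial

noncomputable section

/-- The polynomial algebra `R = ℚ[u₀,u₁,…,v₀,v₁,…]`; `X (.inl k)` is `u_k`,
`X (.inr k)` is `v_k`. -/
abbrev MRing : Type := MvPolynomial (ℕ ⊕ ℕ) ℚ

/-- The jet variable `u_k`. -/
def uu (k : ℕ) : MRing := X (Sum.inl k)

/-- The jet variable `v_k`. -/
def vv (k : ℕ) : MRing := X (Sum.inr k)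

/-- The total derivative `D_x`: `D_x(u_k) = u_{k+1}`, `D_x(v_k) = v_{k+1}`. -/
def Dx : Derivation ℚ MRing MRing :=
  mkDerivation ℚ fun i =>
    match i with
    | Sum.inl k => uu (k + 1)
    | Sum.inr k => vv (k + 1)

/-- The right-hand side `f = −u₃ + 6uu₁ − 3vv₃ − 3v₁v₂ + 3u₁v² + 6uvv₁` of the
coupled KdV–mKdV system. -/
def fRhs : MRing :=
  -uu 3 + 6 * uu 0 * uu 1 - 3 * vv 0 * vv 3 - 3 * vv 1 * vv 2
    + 3 * uu 1 * vv 0 ^ 2 + 6 * uu 0 * vv 0 * vv 1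

/-- The right-hand side `g = −v₃ + 3v²v₁ + 3uv₁ + 3u₁v` of the coupled KdV–mKdV system. -/
def gRhs : MRing :=
  -vv 3 + 3 * vv 0 ^ 2 * vv 1 + 3 * uu 0 * vv 1 + 3 * uu 1 * vv 0

/-- The total derivative `D_t`: `D_t(u_k) = D_x^k(f)`, `D_t(v_k) = D_x^k(g)`. -/
def Dt : Derivation ℚ MRing MRing :=
  mkDerivation ℚ fun i =>
    match i with
    | Sum.inl k => (⇑Dx)^[k] fRhs
    | Sum.inr k => (⇑Dx)^[k] gRhs

/-- The energy density `X = (1/2)(u² + uv² − v·v₂)`. -/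
def Xdens : MRing :=
  C (1/2 : ℚ) * (uu 0 ^ 2 + uu 0 * vv 0 ^ 2 - vv 0 * vv 2)

/-- The flux `T` of the energy conservation law. -/
def Tflux : MRing :=
  C (1/2 : ℚ) *
    (4 * uu 0 ^ 3 + 9 * uu 0 ^ 2 * vv 0 ^ 2 - 2 * uu 0 * uu 2 + 3 * uu 0 * vv 0 ^ 4
      - 11 * uu 0 * vv 0 * vv 2 + uu 0 * vv 1 ^ 2 + uu 1 ^ 2 - uu 1 * vv 0 * vv 1
      - 4 * uu 2 * vv 0 ^ 2 - 6 * vv 0 ^ 3 * vv 2 - 3 * vv 0 ^ 2 * vv 1 ^ 2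
      + vv 0 * vv 4 - vv 1 * vv 3 + vv 2 ^ 2)

lemma D_num (D : Derivation ℚ MRing MRing) (n : ℕ) [n.AtLeastTwo] :
    D (OfNat.ofNat n) = 0 := by
  rw [← Nat.cast_ofNat]; exact D.map_natCast _

lemma D_C (D : Derivation ℚ MRing MRing) (q : ℚ) : D (C q) = 0 := by
  rw [← MvPolynomial.algebraMap_eq]; exact D.map_algebraMap q

lemma Dx_uu (k : ℕ) : Dx (uu k) = uu (k+1) := by simp [Dx, uu, mkDerivation_X]
lemma Dx_vv (k : ℕ) : Dx (vv k) = vv (k+1) := by simp [Dx, vv, mkDerivation_X]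
lemma Dt_uu (k : ℕ) : Dt (uu k) = (⇑Dx)^[k] fRhs := by simp [Dt, uu, mkDerivation_X]
lemma Dt_vv (k : ℕ) : Dt (vv k) = (⇑Dx)^[k] gRhs := by simp [Dt, vv, mkDerivation_X]

lemma key : Dt Xdens = Dx Tflux := by
  have hC : ∀ (D : Derivation ℚ MRing MRing) (q : ℚ) (p : MRing),
      D (C q * p) = C q * D p := by
    intro D q p
    rw [Derivation.leibniz, D_C]
    simp [smul_eq_mul]
  have h2 : Dx ((2:MRing)) = 0 := D_num Dx 2
  have h3 : Dx ((3:MRing)) = 0 := D_num Dx 3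
  have h4 : Dx ((4:MRing)) = 0 := D_num Dx 4
  have h6 : Dx ((6:MRing)) = 0 := D_num Dx 6
  have h9 : Dx ((9:MRing)) = 0 := D_num Dx 9
  have h11 : Dx ((11:MRing)) = 0 := D_num Dx 11
  have t2 : Dt ((2:MRing)) = 0 := D_num Dt 2
  have t3 : Dt ((3:MRing)) = 0 := D_num Dt 3
  have t6 : Dt ((6:MRing)) = 0 := D_num Dt 6
  simp only [Xdens, Tflux, hC, h2, h3, h4, h6, h9, h11, t2, t3, t6, map_zero, map_add, map_sub, map_neg, Derivation.leibniz,
    Derivation.leibniz_pow, Dx_uu, Dx_vv, Dt_uu, Dt_vv,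
    Function.iterate_succ', Function.iterate_zero, Function.comp_apply, id_eq,
    fRhs, gRhs, smul_eq_mul, nsmul_eq_mul, D_num, D_C, Derivation.map_natCast, Nat.cast_ofNat, map_zero, mul_zero, zero_mul, smul_zero]
  ring

/-- The energy conservation law of the coupled KdV–mKdV system: `D_t(X) = D_x(T)`;
in particular `X` is a conserved density (i.e. `D_t(X)` lies in the image of `D_x`). -/
theorem kdv_mkdv_energy_conservation :
    Dt Xdens = Dx Tflux ∧ ∃ T : MRing, Dt Xdens = Dx T :=
  ⟨key, Tflux, key⟩
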